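/- Let M = M_1 ∪ M_2 ∪ M_3 be a maximum uniquely restricted matching in G(Γ) with M_1 contained in the edge sets of the X_i's, M_2 contained in the edge sets of the C_j's, and M_3 contained in the set of edges between ∪_i X_i and its complement, chosen minimizing |M_3|. If i ∈ [n] is such that M_3 contains an edge incident with X_i, then M_1 contains no edge of the star on X_i. -/

import Mathlib

open SimpleGraph

/-- The subgraph of `G` consisting of those pairs in `s` that are actually edges of `G`. -/
def pairsSubgraph {V : Type*} (G : SimpleGraph V) (s : Set (V × V)) : G.Subgraph where
  verts := {v | ∃ a b, (G.Adj a b ∧ ((a, b) ∈ s ∨ (b, a) ∈ s)) ∧ (v = a ∨ v = b)}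
  Adj a b := G.Adj a b ∧ ((a, b) ∈ s ∨ (b, a) ∈ s)
  adj_sub h := h.1
  edge_vert h := ⟨_, _, h, Or.inl rfl⟩
  symm := ⟨fun _ _ h => ⟨h.1.symm, h.2.symm⟩⟩

/-- `M` is an induced matching in `G`: it is a matching, and `G(M)`, the subgraph of `G`
induced by the set `V(M)` of covered vertices (which is `M.verts` for a matching subgraph),
is `1`-regular, i.e. every vertex of `G(M)` has exactly one neighbour in `G(M)`. -/
def IsInducedMatching {V : Type*} (G : SimpleGraph V) (M : G.Subgraph) : Prop :=
  M.IsMatching ∧ ∀ v : M.verts, ∃! w : M.verts, (G.induce M.verts).Adj v w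

/-- `M` is an acyclic matching in `G`: it is a matching and `G(M)` is a forest. -/
def IsAcyclicMatching {V : Type*} (G : SimpleGraph V) (M : G.Subgraph) : Prop :=
  M.IsMatching ∧ (G.induce M.verts).IsAcyclic

/-- `M` is a uniquely restricted matching in `G`: it is a matching and it is the unique
perfect matching of `G(M)`, i.e. the unique matching of `G` covering exactly `M.verts`. -/
def IsURMatching {V : Type*} (G : SimpleGraph V) (M : G.Subgraph) : Prop :=
  M.IsMatching ∧ ∀ M' : G.Subgraph, M'.IsMatching → M'.verts = M.verts → M' = M

/-- The (ordinary) matching number `ν(G)`: the maximum cardinality of a matching in `G`. -/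
noncomputable def nuMatch {V : Type*} (G : SimpleGraph V) : ℕ :=
  sSup {k : ℕ | ∃ M : G.Subgraph, M.IsMatching ∧ M.edgeSet.ncard = k}

/-- The uniquely restricted matching number `ν_ur(G)`. -/
noncomputable def nuUR {V : Type*} (G : SimpleGraph V) : ℕ :=
  sSup {k : ℕ | ∃ M : G.Subgraph, IsURMatching G M ∧ M.edgeSet.ncard = k}

/-- The acyclic matching number `ν_ac(G)`. -/
noncomputable def nuAc {V : Type*} (G : SimpleGraph V) : ℕ :=
  sSup {k : ℕ | ∃ M : G.Subgraph, IsAcyclicMatching G M ∧ M.edgeSet.ncard = k}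

/-- The induced (strong) matching number `ν_s(G)`. -/
noncomputable def nuS {V : Type*} (G : SimpleGraph V) : ℕ :=
  sSup {k : ℕ | ∃ M : G.Subgraph, IsInducedMatching G M ∧ M.edgeSet.ncard = k}

/-- `cyc` is an `M`-alternating cycle in `G`: a cycle of `G` whose edges alternate between
edges of `M` and edges of `E(G) \ M`. -/
def IsAltCycle {V : Type*} (G : SimpleGraph V) (M : G.Subgraph) {v : V}
    (cyc : G.Walk v v) : Prop :=
  cyc.IsCycle ∧ cyc.toSubgraph.spanningCoe.IsAlternating M.spanningCoe

/-- Vertices of the graph `G(Γ)` for the EXACT SATISFIABILITY instance `Γ` with `n` variables and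
`m` clauses (all literals positive): `Sum.inl (i, 0) = t_i`, `Sum.inl (i, 1) = f_i`,
`Sum.inl (i, 2) = u_i` are the vertices of the star `X_i ≅ K_{1,2}` with centre `u_i`;
`Sum.inr (j, none) = v_j` is the centre of the star `C_j ≅ K_{1,3}` and `Sum.inr (j, some i)` is
the leaf of `C_j` identified with the literal `x_i` (it is isolated unless `x_i ∈ c_j`). -/
abbrev XSatV (n m : ℕ) : Type := (Fin n × Fin 3) ⊕ (Fin m × Option (Fin n))

/-- The base relation for `G(Γ)`: the star edges `u_i f_i`, `u_i t_i` and `v_j w` for each leaf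
`w` of `C_j`; an edge from `f_i` to every vertex of `W` (the leaves identified with the literal
`x_i`), and an edge from `t_i` to every vertex of `W'` (the leaves of those stars `C_j` that meet
`W`, which are not in `W`). -/
def xsatRel {n m : ℕ} (c : Fin m → Finset (Fin n)) : XSatV n m → XSatV n m → Prop
  | Sum.inl (i, k), Sum.inl (i', k') => i = i' ∧ k = 2 ∧ k' ≠ 2
  | Sum.inr (j, o), Sum.inr (j', o') => j = j' ∧ o = none ∧ ∃ i, o' = some i ∧ i ∈ c j
  | Sum.inl (i, k), Sum.inr (j, o) =>
      (k = 1 ∧ o = some i ∧ i ∈ c j) ∨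
      (k = 0 ∧ ∃ i', o = some i' ∧ i' ∈ c j ∧ i ∈ c j ∧ i' ≠ i)
  | Sum.inr _, Sum.inl _ => False

/-- The graph `G(Γ)` built from the EXACT SATISFIABILITY instance `Γ` whose clauses are given
by `c`. -/
def xsatGraph {n m : ℕ} (c : Fin m → Finset (Fin n)) : SimpleGraph (XSatV n m) :=
  SimpleGraph.fromRel (xsatRel c)

/-- The number of edges of a subgraph `M` joining the left part and the right part of the vertex
set; this counts the edges of `M₃` in the decomposition `M = M₁ ∪ M₂ ∪ M₃`. -/
noncomputable def crossCount {α β : Type*} {G : SimpleGraph (α ⊕ β)} (M : G.Subgraph) : ℕ :=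
  {p : α × β | M.Adj (Sum.inl p.1) (Sum.inr p.2)}.ncard


/-!
Write `u_i y` for the star edge and `x w` for the cross edge of `M` at `X_i`, where `w` is a leaf
of `C_j`; then `y u_i x w v_j` is an `M`-alternating path. Every leaf of `C_j` is adjacent to `t_i`
or to `f_i`, that is, to `x` or to `y`. Hence, if `v_j` were covered by `M`, its partner would close
an `M`-alternating cycle of length 4 or 6, which a uniquely restricted matching does not have.
So `v_j` is exposed, and switching `M` along the path gives a matching `M'` of the same size with
one cross edge fewer. `M'` is again uniquely restricted: a perfect matching `N` of `G(M')` must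
match `u_i` to `x` (as `y` is exposed) and `v_j` to a leaf adjacent to `x` or `y`, and switching `N`
back along the corresponding alternating path ending at `y` gives a perfect matching of `G(M)`,
which has to be `M`; this forces `N = M'`. That contradicts the minimality of `|M₃|`.
-/

namespace SimpleGraph.Subgraph

variable {V : Type*} {G : SimpleGraph V} {M N P : G.Subgraph} {s : Set V} {a b c d e : V}

lemma IsMatching.ncard_verts [Finite V] (hM : M.IsMatching) :
    M.verts.ncard = 2 * M.edgeSet.ncard := by
  classical
  have := Fintype.ofFinite V
  have hdeg : ∀ v, M.spanningCoe.degree v = if v ∈ M.verts then 1 else 0 := by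
    intro v
    rw [degree_spanningCoe]
    split_ifs with hv
    · exact isMatching_iff_forall_degree.mp hM v hv
    · exact degree_of_notMem_verts hv
  rw [← edgeSet_spanningCoe, ← coe_edgeFinset, Set.ncard_coe_finset,
    ← sum_degrees_eq_twice_card_edges]
  simp [hdeg, Set.ncard_eq_toFinset_card']

lemma IsMatching.eq_of_le (hM : M.IsMatching) (hN : N.IsMatching) (hle : M ≤ N)
    (hverts : N.verts ⊆ M.verts) : M = N := by
  refine le_antisymm hle ⟨hverts, fun x y hxy => ?_⟩
  obtain ⟨z, hxz, -⟩ := hM (hverts hxy.fst_mem)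
  rwa [hN.eq_of_adj_left hxy (hle.2 hxz)]

lemma IsMatching.ne_of_adj_of_ne (hM : M.IsMatching) (hac : M.Adj a c) (hbd : M.Adj b d)
    (hcd : c ≠ d) : a ≠ b :=
  fun h => hcd (hM.eq_of_adj_left hac (h ▸ hbd))

lemma IsMatching.ncard_edgeSet_eq_of_verts_eq_insert_sdiff [Finite V] (hM : M.IsMatching)
    (hN : N.IsMatching) (hNv : N.verts = insert e (M.verts \ {a})) (ha : a ∈ M.verts)
    (he : e ∉ M.verts) :
    N.edgeSet.ncard = M.edgeSet.ncard := by
  have h := hN.ncard_verts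
  rw [hNv, Set.ncard_insert_of_notMem (fun h => he h.1), Set.ncard_sdiff_singleton_add_one ha,
    hM.ncard_verts] at h
  omega

lemma IsMatching.sup_subgraphOfAdj (hM : M.IsMatching) (hab : G.Adj a b) (ha : a ∉ M.verts)
    (hb : b ∉ M.verts) : (M ⊔ G.subgraphOfAdj hab).IsMatching :=
  hM.sup (.subgraphOfAdj hab) <| by
    rw [hM.support_eq_verts, support_subgraphOfAdj, Set.disjoint_insert_right,
      Set.disjoint_singleton_right]
    exact ⟨ha, hb⟩

lemma IsMatching.deleteVerts_sup (hM : M.IsMatching) (hP : P.IsMatching)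
    (hs : ∀ x ∈ s, ∃ y ∈ s, M.Adj x y) (hPs : P.verts ⊆ s ∪ M.vertsᶜ) :
    (M.deleteVerts s ⊔ P).IsMatching := by
  have hclosed : ∀ ⦃x y⦄, M.Adj x y → x ∈ s → y ∈ s := fun x y hxy hx => by
    obtain ⟨z, hz, hxz⟩ := hs x hx
    rwa [hM.eq_of_adj_left hxy hxz]
  have hdel : (M.deleteVerts s).IsMatching := by
    rintro x ⟨hx, hxs⟩
    obtain ⟨y, hxy, huniq⟩ := hM hx
    exact ⟨y, deleteVerts_adj.mpr
        ⟨hx, hxs, hxy.snd_mem, fun hy => hxs (hclosed hxy.symm hy), hxy⟩,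
      fun z hz => huniq z (deleteVerts_adj.mp hz).2.2.2.2⟩
  refine hdel.sup hP ?_
  rw [hdel.support_eq_verts, hP.support_eq_verts, deleteVerts_verts]
  exact Set.disjoint_left.mpr fun x ⟨hx, hxs⟩ hxP => (hPs hxP).elim hxs (· hx)

lemma IsMatching.flip_alternating_path2 (hM : M.IsMatching) (hab : M.Adj a b) (hbe : G.Adj b e)
    (he : e ∉ M.verts) :
    (M.deleteVerts {a, b} ⊔ G.subgraphOfAdj hbe).IsMatching ∧
      (M.deleteVerts {a, b} ⊔ G.subgraphOfAdj hbe).verts = insert e (M.verts \ {a}) := by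
  refine ⟨hM.deleteVerts_sup (.subgraphOfAdj hbe) ?_ ?_, ?_⟩
  · rintro x (rfl | rfl)
    exacts [⟨b, by simp, hab⟩, ⟨a, by simp, hab.symm⟩]
  · simp [Set.insert_subset_iff, he]
  · ext x
    simp only [verts_sup, deleteVerts_verts, subgraphOfAdj_verts, Set.mem_union, Set.mem_sdiff,
      Set.mem_insert_iff, Set.mem_singleton_iff]
    grind [hab.ne, hab.snd_mem]

lemma IsMatching.flip_alternating_path4 (hM : M.IsMatching) (hab : M.Adj a b) (hbc : G.Adj b c)
    (hcd : M.Adj c d) (hde : G.Adj d e) (he : e ∉ M.verts) (hac : a ≠ c) :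
    (M.deleteVerts {a, b, c, d} ⊔ (G.subgraphOfAdj hbc ⊔ G.subgraphOfAdj hde)).IsMatching ∧
      (M.deleteVerts {a, b, c, d} ⊔ (G.subgraphOfAdj hbc ⊔ G.subgraphOfAdj hde)).verts =
        insert e (M.verts \ {a}) := by
  have hdb := hM.ne_of_adj_of_ne hcd.symm hab.symm hac.symm
  have had := hM.ne_of_adj_of_ne hab hcd.symm hbc.ne
  have heb : e ≠ b := fun h => he (h ▸ hab.snd_mem)
  have hec : e ≠ c := fun h => he (h ▸ hcd.fst_mem)
  refine ⟨hM.deleteVerts_sup ((IsMatching.subgraphOfAdj hbc).sup_subgraphOfAdj hde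
    (by simp [hdb, hcd.ne.symm]) (by simp [heb, hec])) ?_ ?_, ?_⟩
  · rintro x (rfl | rfl | rfl | rfl)
    exacts [⟨b, by simp, hab⟩, ⟨a, by simp, hab.symm⟩, ⟨d, by simp, hcd⟩, ⟨c, by simp, hcd.symm⟩]
  · simp [Set.insert_subset_iff, he]
  · ext x
    simp only [verts_sup, deleteVerts_verts, subgraphOfAdj_verts, Set.mem_union, Set.mem_sdiff,
      Set.mem_insert_iff, Set.mem_singleton_iff]
    grind [hab.ne, hab.snd_mem, hcd.fst_mem, hcd.snd_mem]

end SimpleGraph.Subgraph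

namespace IsURMatching

open Subgraph

variable {V : Type*} {G : SimpleGraph V} {M N P : G.Subgraph} {a b c d e f z : V}

lemma le_of_isMatching (hM : IsURMatching G M) (hP : P.IsMatching)
    (hPM : ∀ x ∈ P.verts, ∃ y ∈ P.verts, M.Adj x y) : P ≤ M := by
  have hverts : (M.deleteVerts P.verts ⊔ P).verts = M.verts := by
    simp only [verts_sup, deleteVerts_verts, Set.sdiff_union_self, Set.union_eq_left]
    exact fun x hx => (hPM x hx).elim fun y hy => hy.2.fst_mem
  rw [← hM.2 _ (hM.1.deleteVerts_sup hP hPM fun x hx => Or.inl hx) hverts]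
  exact le_sup_right

lemma eq_of_alternating_cycle4 (hM : IsURMatching G M) (hab : M.Adj a b) (hbc : G.Adj b c)
    (hcd : M.Adj c d) (hda : G.Adj d a) : a = c := by
  by_contra hac
  have hbd := hM.1.ne_of_adj_of_ne hab.symm hcd.symm hac
  have hP := (IsMatching.subgraphOfAdj hbc).sup_subgraphOfAdj hda
    (by simp [hbd.symm, hcd.ne.symm]) (by simp [hab.ne, hac])
  have hle := hM.le_of_isMatching hP <| by
    simp only [verts_sup, subgraphOfAdj_verts]
    rintro x (hx | hx) <;> simp only [Set.mem_insert_iff, Set.mem_singleton_iff] at hx <;>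
      rcases hx with rfl | rfl
    exacts [⟨a, by simp, hab.symm⟩, ⟨d, by simp, hcd⟩, ⟨c, by simp, hcd.symm⟩, ⟨b, by simp, hab⟩]
  exact hac (hM.1.eq_of_adj_left hab.symm (hle.2 (sup_adj.mpr (.inl (by simp)))))

lemma eq_of_alternating_cycle6 (hM : IsURMatching G M) (hab : M.Adj a b) (hbc : G.Adj b c)
    (hcd : M.Adj c d) (hde : G.Adj d e) (hef : M.Adj e f) (hfa : G.Adj f a) :
    a = c ∨ c = e ∨ e = a := by
  by_contra! h
  obtain ⟨hac, hce, hea⟩ := h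
  have hdb := hM.1.ne_of_adj_of_ne hcd.symm hab.symm hac.symm
  have heb := hM.1.ne_of_adj_of_ne hef hab.symm hfa.ne
  have hfb := hM.1.ne_of_adj_of_ne hef.symm hab.symm hea
  have hfc := hM.1.ne_of_adj_of_ne hef.symm hcd hde.ne.symm
  have hfd := hM.1.ne_of_adj_of_ne hef.symm hcd.symm hce.symm
  have had := hM.1.ne_of_adj_of_ne hab hcd.symm hbc.ne
  have hP := ((IsMatching.subgraphOfAdj hbc).sup_subgraphOfAdj hde
    (by simp [hdb, hcd.ne.symm]) (by simp [heb, hce.symm])).sup_subgraphOfAdj hfa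
    (by simp [hfb, hfc, hfd, hef.ne.symm]) (by simp [hab.ne, hac, had, hea.symm])
  have hle := hM.le_of_isMatching hP <| by
    simp only [verts_sup, subgraphOfAdj_verts]
    rintro x ((hx | hx) | hx) <;> simp only [Set.mem_insert_iff, Set.mem_singleton_iff] at hx <;>
      rcases hx with rfl | rfl
    exacts [⟨a, by simp, hab.symm⟩, ⟨d, by simp, hcd⟩, ⟨c, by simp, hcd.symm⟩,
      ⟨f, by simp, hef⟩, ⟨e, by simp, hef.symm⟩, ⟨b, by simp, hab⟩]
  exact hac (hM.1.eq_of_adj_left hab.symm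
    (hle.2 (sup_adj.mpr (.inl (sup_adj.mpr (.inl (by simp)))))))

lemma notMem_verts_of_alternating_path (hM : IsURMatching G M) (hab : M.Adj a b)
    (hbc : G.Adj b c) (hcd : M.Adj c d) (hde : G.Adj d e) (hac : a ≠ c) (hea : e ≠ a)
    (hec : e ≠ c) (he : ∀ z, G.Adj e z → G.Adj z c ∨ G.Adj z a) : e ∉ M.verts := by
  intro heM
  obtain ⟨z, hez, -⟩ := hM.1 heM
  rcases he z (M.adj_sub hez) with hzc | hza
  · exact hec (hM.eq_of_alternating_cycle4 hcd hde hez hzc).symm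
  · rcases hM.eq_of_alternating_cycle6 hcd hde hez hza hab hbc with h | h | h
    exacts [hec h.symm, hea h, hac h]

/-- Switching `N` back along `e z a` would give a perfect matching of `G(M)` containing `bc`. -/
lemma not_adj_of_flip (hM : IsURMatching G M) (hab : M.Adj a b) (hc : c ∈ M.verts) (hac : a ≠ c)
    (heM : e ∉ M.verts) (hN : N.IsMatching) (haN : a ∉ N.verts)
    (hNv : insert a (N.verts \ {e}) = M.verts) (hNbc : N.Adj b c) (hez : N.Adj e z) :
    ¬ G.Adj z a := by
  intro hza
  obtain ⟨hN2, hN2v⟩ := hN.flip_alternating_path2 hez hza haN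
  have h2 := hM.2 _ hN2 (hN2v.trans hNv)
  refine hac (hM.1.eq_of_adj_left hab.symm (h2 ▸ ?_))
  refine sup_adj.mpr (.inl (deleteVerts_adj.mpr ⟨hNbc.fst_mem, ?_, hNbc.snd_mem, ?_, hNbc⟩))
  · rintro (rfl | rfl)
    · exact heM hab.snd_mem
    · exact heM (hN.eq_of_adj_left hez.symm hNbc ▸ hc)
  · rintro (rfl | rfl)
    · exact heM hc
    · exact heM (hN.eq_of_adj_left hez.symm hNbc.symm ▸ hab.snd_mem)

theorem flip_alternating_path4 (hM : IsURMatching G M) (hab : M.Adj a b) (hbc : G.Adj b c)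
    (hcd : M.Adj c d) (hde : G.Adj d e) (heM : e ∉ M.verts) (hac : a ≠ c)
    (hb : ∀ z, G.Adj b z → z = a ∨ z = c) (he : ∀ z, G.Adj e z → G.Adj z c ∨ G.Adj z a) :
    IsURMatching G (M.deleteVerts {a, b, c, d} ⊔ (G.subgraphOfAdj hbc ⊔ G.subgraphOfAdj hde)) := by
  obtain ⟨hM', hM'v⟩ := hM.1.flip_alternating_path4 hab hbc hcd hde heM hac
  refine ⟨hM', fun N hN hNv => ?_⟩
  rw [hM'v] at hNv
  have hae : a ≠ e := fun h => heM (h ▸ hab.fst_mem)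
  have haN : a ∉ N.verts := by simp [hNv, hae]
  have hNv' : insert a (N.verts \ {e}) = M.verts := by
    rw [hNv, Set.insert_sdiff_self_of_notMem (fun h => heM h.1), Set.insert_sdiff_singleton,
      Set.insert_eq_of_mem hab.fst_mem]
  have hNbc : N.Adj b c := by
    obtain ⟨z, hbz, -⟩ := hN (by simp [hNv, hab.ne.symm, hab.snd_mem] : b ∈ N.verts)
    obtain rfl | rfl := hb z (N.adj_sub hbz)
    · exact absurd hbz.snd_mem haN
    · exact hbz
  obtain ⟨z, hez, -⟩ := hN (by simp [hNv] : e ∈ N.verts)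
  have hzc : G.Adj z c := (he z (N.adj_sub hez)).resolve_right
    (hM.not_adj_of_flip hab hcd.fst_mem hac heM hN haN hNv' hNbc hez)
  -- switching `N` back along `e z c b a` gives a perfect matching of `G(M)`
  obtain ⟨hN4, hN4v⟩ := hN.flip_alternating_path4 hez hzc hNbc.symm hab.adj_sub.symm haN
    (fun h => heM (h ▸ hcd.fst_mem))
  have h4 := hM.2 _ hN4 (hN4v.trans hNv')
  obtain rfl : z = d := hM.1.eq_of_adj_left (h4 ▸ by simp) hcd
  refine (hM'.eq_of_le hN ⟨hNv ▸ hM'v.le, fun x y hxy => ?_⟩ (hNv ▸ hM'v.ge)).symm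
  rcases hxy with hxy | h | h
  · obtain ⟨-, hx, -, -, hxy⟩ := deleteVerts_adj.mp hxy
    simp only [Set.mem_insert_iff, Set.mem_singleton_iff, not_or] at hx
    rw [← h4] at hxy
    rcases hxy with hxy | h | h
    · exact (deleteVerts_adj.mp hxy).2.2.2.2
    · rcases Sym2.eq_iff.mp h with ⟨h, -⟩ | ⟨-, h⟩
      exacts [absurd h.symm hx.2.2.2, absurd h.symm hx.2.2.1]
    · rcases Sym2.eq_iff.mp h with ⟨h, -⟩ | ⟨-, h⟩
      exacts [absurd h.symm hx.2.1, absurd h.symm hx.1]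
  · exact Subgraph.mem_edgeSet.mp (h ▸ Subgraph.mem_edgeSet.mpr hNbc)
  · exact Subgraph.mem_edgeSet.mp (h ▸ Subgraph.mem_edgeSet.mpr hez.symm)

end IsURMatching

lemma crossCount_lt_crossCount {α β : Type*} [Finite α] [Finite β] {G : SimpleGraph (α ⊕ β)}
    {M N : G.Subgraph} (hNM : ∀ p q, N.Adj (.inl p) (.inr q) → M.Adj (.inl p) (.inr q))
    {p : α} {q : β} (hM : M.Adj (.inl p) (.inr q)) (hN : ¬ N.Adj (.inl p) (.inr q)) :
    crossCount N < crossCount M :=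
  Set.ncard_lt_ncard ⟨fun _ hr => hNM _ _ hr, fun h => hN (h (show (p, q) ∈ _ from hM))⟩
    (Set.toFinite _)

section XSat

variable {n m : ℕ} {c : Fin m → Finset (Fin n)} {i : Fin n} {j : Fin m}

lemma xsatGraph_adj_center_left_iff {z : XSatV n m} :
    (xsatGraph c).Adj (.inl (i, 2)) z ↔ ∃ l ≠ 2, z = .inl (i, l) := by
  rcases z with ⟨i', l⟩ | ⟨j', o⟩ <;> grind [xsatGraph, xsatRel, fromRel_adj]

lemma xsatGraph_adj_center_right_iff {z : XSatV n m} :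
    (xsatGraph c).Adj (.inr (j, none)) z ↔ ∃ a ∈ c j, z = .inr (j, some a) := by
  rcases z with ⟨i', l⟩ | ⟨j', o⟩ <;> grind [xsatGraph, xsatRel, fromRel_adj]

lemma xsatGraph_adj_inl_inr {k : Fin 3} {o : Option (Fin n)}
    (h : (xsatGraph c).Adj (.inl (i, k)) (.inr (j, o))) :
    k ≠ 2 ∧ i ∈ c j ∧ ∃ a ∈ c j, o = some a := by
  grind [xsatGraph, xsatRel, fromRel_adj]

lemma xsatGraph_adj_inl_inl {i' : Fin n} {k k' : Fin 3}
    (h : (xsatGraph c).Adj (.inl (i, k)) (.inl (i', k'))) : k = 2 ∨ k' = 2 := by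
  grind [xsatGraph, xsatRel, fromRel_adj]

lemma xsatGraph_exists_adj_leaf {a : Fin n} (ha : a ∈ c j) (hi : i ∈ c j) :
    ∃ l ≠ 2, (xsatGraph c).Adj (.inr (j, some a)) (.inl (i, l)) := by
  by_cases hai : a = i
  · exact ⟨1, by decide, by grind [xsatGraph, xsatRel, fromRel_adj]⟩
  · exact ⟨0, by decide, by grind [xsatGraph, xsatRel, fromRel_adj]⟩

lemma xsatGraph_eq_or_eq_of_adj_center {x y : XSatV n m}
    (hx : (xsatGraph c).Adj (.inl (i, 2)) x) (hy : (xsatGraph c).Adj (.inl (i, 2)) y)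
    (hxy : x ≠ y) : ∀ z, (xsatGraph c).Adj (.inl (i, 2)) z → z = x ∨ z = y := by
  obtain ⟨k, hk, rfl⟩ := xsatGraph_adj_center_left_iff.mp hx
  obtain ⟨l, hl, rfl⟩ := xsatGraph_adj_center_left_iff.mp hy
  intro z hz
  obtain ⟨_, hr, rfl⟩ := xsatGraph_adj_center_left_iff.mp hz
  simp only [ne_eq, Sum.inl.injEq, Prod.mk.injEq, true_and] at hxy ⊢
  omega

lemma xsatGraph_adj_or_adj_of_adj_center_right {x y : XSatV n m} (hi : i ∈ c j)
    (hx : (xsatGraph c).Adj (.inl (i, 2)) x) (hy : (xsatGraph c).Adj (.inl (i, 2)) y)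
    (hxy : x ≠ y) :
    ∀ z, (xsatGraph c).Adj (.inr (j, none)) z → (xsatGraph c).Adj z x ∨ (xsatGraph c).Adj z y := by
  intro z hz
  obtain ⟨a, ha, rfl⟩ := xsatGraph_adj_center_right_iff.mp hz
  obtain ⟨l, hl, hal⟩ := xsatGraph_exists_adj_leaf ha hi
  rcases xsatGraph_eq_or_eq_of_adj_center hx hy hxy _
    (xsatGraph_adj_center_left_iff.mpr ⟨l, hl, rfl⟩) with h | h <;> rw [h] at hal
  exacts [.inl hal, .inr hal]

end XSat

theorem no_star_edge_in_Xi_of_cross_edge_general {n m : ℕ} (c : Fin m → Finset (Fin n))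
    (M : (xsatGraph c).Subgraph) (hur : IsURMatching (xsatGraph c) M)
    (hmax : M.edgeSet.ncard = nuUR (xsatGraph c))
    (hmin : ∀ M' : (xsatGraph c).Subgraph, IsURMatching (xsatGraph c) M' →
      M'.edgeSet.ncard = nuUR (xsatGraph c) → crossCount M ≤ crossCount M')
    (i : Fin n)
    (hi : ∃ (k : Fin 3) (w : Fin m × Option (Fin n)), M.Adj (Sum.inl (i, k)) (Sum.inr w)) :
    ∀ k k' : Fin 3, ¬ M.Adj (Sum.inl (i, k)) (Sum.inl (i, k')) := by
  intro k k' hstar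
  obtain ⟨k₀, ⟨j, o⟩, hxw⟩ := hi
  obtain ⟨hk₀, hij, a, ha, rfl⟩ := xsatGraph_adj_inl_inr (M.adj_sub hxw)
  obtain ⟨l, hyu⟩ : ∃ l, M.Adj (.inl (i, l)) (.inl (i, 2)) := by
    rcases xsatGraph_adj_inl_inl (M.adj_sub hstar) with rfl | rfl
    exacts [⟨_, hstar.symm⟩, ⟨_, hstar⟩]
  have hyx : (.inl (i, l) : XSatV n m) ≠ .inl (i, k₀) := fun h =>
    Sum.inr_ne_inl (hur.1.eq_of_adj_left hxw (h ▸ hyu))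
  have hux : (xsatGraph c).Adj (.inl (i, 2)) (.inl (i, k₀)) :=
    xsatGraph_adj_center_left_iff.mpr ⟨k₀, hk₀, rfl⟩
  have hu := xsatGraph_eq_or_eq_of_adj_center (M.adj_sub hyu).symm hux hyx
  have hv := xsatGraph_adj_or_adj_of_adj_center_right hij hux (M.adj_sub hyu).symm hyx.symm
  have hwv : (xsatGraph c).Adj (.inr (j, some a)) (.inr (j, none)) :=
    (xsatGraph_adj_center_right_iff.mpr ⟨a, ha, rfl⟩).symm
  have hvM := hur.notMem_verts_of_alternating_path hyu hux hxw hwv hyx (by simp) (by simp) hv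
  obtain ⟨hM', hM'v⟩ := hur.1.flip_alternating_path4 hyu hux hxw hwv hvM hyx
  have hsize := hur.1.ncard_edgeSet_eq_of_verts_eq_insert_sdiff hM' hM'v hyu.fst_mem hvM
  refine (hmin _ (hur.flip_alternating_path4 hyu hux hxw hwv hvM hyx hu hv) (hsize.trans hmax)
    ).not_gt (crossCount_lt_crossCount (fun p q h => ?_) hxw (by simp))
  rcases h with h | h | h
  · exact (Subgraph.deleteVerts_adj.mp h).2.2.2.2
  · simp at h
  · simp at h

/-- Let `M = M₁ ∪ M₂ ∪ M₃` be a maximum uniquely restricted matching in `G(Γ)` with `M₁`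
contained in the edge sets of the `X_i`'s, `M₂` contained in the edge sets of the `C_j`'s, and
`M₃` contained in the set of edges between `∪ᵢ X_i` and its complement, chosen minimizing `|M₃|`.
If `i ∈ [n]` is such that `M₃` contains an edge incident with `X_i`, then `M₁` contains no edge
of the star on `X_i`. (Since every edge of `G(Γ)` lies within some `X_i`, within some `C_j`, or
crosses between the two sides, the decomposition is determined by `M` itself, and `|M₃|` is
`crossCount M`.) -/
theorem no_star_edge_in_Xi_of_cross_edge {n m : ℕ} (c : Fin m → Finset (Fin n))
    (hcard : ∀ j, (c j).card = 3)
    (hocc : ∀ i : Fin n, (Finset.univ.filter fun j => i ∈ c j).card ≤ 3)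
    (M : (xsatGraph c).Subgraph) (hur : IsURMatching (xsatGraph c) M)
    (hmax : M.edgeSet.ncard = nuUR (xsatGraph c))
    (hmin : ∀ M' : (xsatGraph c).Subgraph, IsURMatching (xsatGraph c) M' →
      M'.edgeSet.ncard = nuUR (xsatGraph c) → crossCount M ≤ crossCount M')
    (i : Fin n)
    (hi : ∃ (k : Fin 3) (w : Fin m × Option (Fin n)), M.Adj (Sum.inl (i, k)) (Sum.inr w)) :
    ∀ k k' : Fin 3, ¬ M.Adj (Sum.inl (i, k)) (Sum.inl (i, k')) :=
  no_star_edge_in_Xi_of_cross_edge_general c M hur hmax hmin i hi
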